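/- Let H = A∧π*F̂ − π*Ω be an invariant closed 3-form on a principal circle bundle X with connection A and curvature F, and let Ĥ = F∧Â − π̂*Ω on the dual bundle X̂ with connection Â and curvature F̂. Then on the correspondence space, d(p*A ∧ p̂*Â) = −p*H + p̂*Ĥ. -/
import Mathlib

/-- **The key identity of T-duality on the correspondence space.**
`ΩM, ΩX, ΩY, ΩZ` model the forms on the base `M`, the circle bundles
`X, X̂` and the correspondence space `X ×_M X̂`; `πX^*, πY^*` and `p^*, q^*`
are the pullbacks (ring homomorphisms commuting with the differentials, with
`p^* ∘ πX^* = q^* ∘ πY^*`).  Let `A, Ahat` be connection forms with curvatures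
`F, Fhat` (`dA = π^*F`, `dAhat = π̂^*Fhat`), `Ω₃` a 3-form on `M`, and
`H = A ∧ π^*Fhat − π^*Ω₃`, `Hhat = π̂^*F ∧ Ahat − π̂^*Ω₃`.  Then
`d(p^*A ∧ p̂^*Ahat) = −p^*H + p̂^*Hhat`. -/
theorem t_duality_correspondence_identity
    {ΩM ΩX ΩY ΩZ : Type*} [Ring ΩM] [Ring ΩX] [Ring ΩY] [Ring ΩZ]
    (dX : ΩX → ΩX) (dY : ΩY → ΩY) (dZ : ΩZ → ΩZ)
    (πX : ΩM →+* ΩX) (πY : ΩM →+* ΩY)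
    (p : ΩX →+* ΩZ) (q : ΩY →+* ΩZ)
    (A H : ΩX) (Ahat Hhat : ΩY) (F Fhat Ω₃ : ΩM)
    (hcompat : ∀ m : ΩM, p (πX m) = q (πY m))
    (hcurvA : dX A = πX F) (hcurvAhat : dY Ahat = πY Fhat)
    (hH : H = A * πX Fhat - πX Ω₃)
    (hHhat : Hhat = πY F * Ahat - πY Ω₃)
    (hpd : ∀ x : ΩX, dZ (p x) = p (dX x))
    (hqd : ∀ y : ΩY, dZ (q y) = q (dY y))
    -- `p^*A` is a 1-form, so it satisfies the odd Leibniz rule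
    (hLeib : ∀ z : ΩZ, dZ (p A * z) = dZ (p A) * z - p A * dZ z) :
    dZ (p A * q Ahat) = -(p H) + q Hhat := by
  rw [hLeib, hpd, hqd, hcurvA, hcurvAhat, hH, hHhat, map_sub, map_sub, map_mul, map_mul,
    hcompat F, hcompat Fhat, hcompat Ω₃]
  noncomm_ring
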